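/- Jacobi's identity: the theta function Θ(τ) = Σ_{n∈ℤ} q^{n²} (with q = e^{2πiτ}) equals η(2τ)⁵ / (η(τ)² η(4τ)²), where η(τ) = q^{1/24} ∏_{n≥1} (1 - qⁿ). In particular Θ has no zeros on the upper half-plane. -/

import Mathlib

noncomputable section

open Complex Matrix CongruenceSubgroup

local notation "SL2Z" => Matrix.SpecialLinearGroup (Fin 2) ℤ

namespace RomikPaper

/-- The upper half-plane as a subset of `ℂ`. -/
def UHP : Set ℂ := {z : ℂ | 0 < z.im}

/-- The normalized derivative `D = (1/(2πi)) d/dτ = q d/dq`. -/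
def Dop (f : ℂ → ℂ) : ℂ → ℂ := fun τ => (2 * (Real.pi : ℂ) * Complex.I)⁻¹ * deriv f τ

/-- The Maass raising operator `∂_k = D - k/(4π Im τ)`. -/
def raise (k : ℚ) (f : ℂ → ℂ) : ℂ → ℂ :=
  fun τ => Dop f τ - (k : ℂ) / (4 * (Real.pi : ℂ) * (τ.im : ℂ)) * f τ

/-- The iterated raising operator `∂_k^n = ∂_{k+2(n-1)} ∘ ⋯ ∘ ∂_{k+2} ∘ ∂_k`. -/
def raiseIter (k : ℚ) : ℕ → (ℂ → ℂ) → (ℂ → ℂ)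
  | 0 => fun f => f
  | n + 1 => fun f => raise (k + 2 * n) (raiseIter k n f)

/-- `Y = -1/(4π Im τ)`. -/
def Yfun : ℂ → ℂ := fun τ => -1 / (4 * (Real.pi : ℂ) * (τ.im : ℂ))

/-- `q^n = e^{2πinτ}`. -/
def qexp (τ : ℂ) (n : ℕ) : ℂ := Complex.exp (2 * (Real.pi : ℂ) * Complex.I * (n : ℂ) * τ)

/-- The Jacobi theta function `Θ(τ) = Σ_{n ∈ ℤ} e^{2πin²τ}`. -/
def Θfun : ℂ → ℂ := fun τ => ∑' n : ℤ, Complex.exp (2 * (Real.pi : ℂ) * Complex.I * (n : ℂ) ^ 2 * τ)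

/-- The Dedekind eta function `η(τ) = q^{1/24} ∏_{n ≥ 1} (1 - qⁿ)`. -/
def ηfun : ℂ → ℂ := fun τ =>
  Complex.exp (2 * (Real.pi : ℂ) * Complex.I * τ / 24) *
    ∏' n : ℕ, (1 - Complex.exp (2 * (Real.pi : ℂ) * Complex.I * ((n : ℂ) + 1) * τ))

/-- `σ_k(n)`, the sum of `k`-th powers of the positive divisors of `n`. -/
def σfun (k n : ℕ) : ℕ := ∑ d ∈ Nat.divisors n, d ^ k

/-- The quasimodular Eisenstein series `E₂`. -/
def E2fun : ℂ → ℂ := fun τ => 1 - 24 * ∑' n : ℕ, (σfun 1 (n + 1) : ℂ) * qexp τ (n + 1)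

def E4fun : ℂ → ℂ := fun τ => 1 + 240 * ∑' n : ℕ, (σfun 3 (n + 1) : ℂ) * qexp τ (n + 1)

def E6fun : ℂ → ℂ := fun τ => 1 - 504 * ∑' n : ℕ, (σfun 5 (n + 1) : ℂ) * qexp τ (n + 1)

/-- The normalized Eisenstein series `E_k = 1 - (2k/B_k) Σ σ_{k-1}(n) qⁿ`. -/
def Efun (k : ℕ) : ℂ → ℂ := fun τ =>
  1 - ((2 * k / (bernoulli k) : ℚ) : ℂ) * ∑' n : ℕ, (σfun (k - 1) (n + 1) : ℂ) * qexp τ (n + 1)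

/-- The weight 2 form `F₂ = η(4τ)⁸/η(2τ)⁴ = Σ_{n odd} σ₁(n) qⁿ` on `Γ₀(4)`. -/
def F2fun : ℂ → ℂ := fun τ => ∑' n : ℕ, (if Odd n then (σfun 1 n : ℂ) else 0) * qexp τ n

/-- The extended Jacobi symbol `(c/d)` in the sense of Shimura (for `d` odd). -/
def shimuraSym (c d : ℤ) : ℤ :=
  if d < 0 ∧ c < 0 then -(jacobiSym c d.natAbs) else jacobiSym c d.natAbs

/-- `ε_d = 1` if `d ≡ 1 (mod 4)` and `ε_d = i` if `d ≡ 3 (mod 4)`. -/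
def epsd (d : ℤ) : ℂ := if d % 4 = 1 then 1 else Complex.I

/-- The Möbius action of `SL(2,ℤ)` on `ℂ`. -/
def mact (γ : SL2Z) (τ : ℂ) : ℂ :=
  (((γ : Matrix (Fin 2) (Fin 2) ℤ) 0 0 : ℂ) * τ + ((γ : Matrix (Fin 2) (Fin 2) ℤ) 0 1 : ℂ)) /
    (((γ : Matrix (Fin 2) (Fin 2) ℤ) 1 0 : ℂ) * τ + ((γ : Matrix (Fin 2) (Fin 2) ℤ) 1 1 : ℂ))

/-- The automorphy factor of weight `w ∈ ½ℤ`: `(cτ+d)^{-w}` for `w ∈ ℤ`, and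
`(c/d) ε_d^{-2w} (√(cτ+d))^{-2w}` for `w ∈ ½ + ℤ` (theta multiplier). -/
def jfac (w : ℚ) (γ : SL2Z) (τ : ℂ) : ℂ :=
  let c : ℤ := (γ : Matrix (Fin 2) (Fin 2) ℤ) 1 0
  let d : ℤ := (γ : Matrix (Fin 2) (Fin 2) ℤ) 1 1
  if w.den = 1 then ((c : ℂ) * τ + (d : ℂ)) ^ (-w.num)
  else (shimuraSym c d : ℂ) * epsd d ^ (-(2 * w).num) *
    (((c : ℂ) * τ + (d : ℂ)) ^ ((1 : ℂ) / 2)) ^ (-(2 * w).num)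

/-- The weight `w` slash action (with theta multiplier in half-integral weight). -/
def slash (w : ℚ) (γ : SL2Z) (f : ℂ → ℂ) : ℂ → ℂ := fun τ => jfac w γ τ * f (mact γ τ)

/-- Moderate growth on the upper half-plane (towards all cusps). -/
def ModerateGrowth (f : ℂ → ℂ) : Prop :=
  ∃ (C : ℝ) (r : ℕ), ∀ τ ∈ UHP, ‖f τ‖ ≤ C * (τ.im ^ r + (τ.im)⁻¹ ^ r)

/-- A holomorphic modular form of weight `w ∈ ½ℤ` on `Γ`. -/
def IsHoloMF (Γ : Subgroup SL2Z) (w : ℚ) (f : ℂ → ℂ) : Prop :=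
  DifferentiableOn ℂ f UHP ∧ ModerateGrowth f ∧
    ∀ γ ∈ Γ, ∀ τ ∈ UHP, slash w γ f τ = f τ

/-- `fj` is the family of associated functions exhibiting `f` as a quasimodular form of
weight `w` and depth `≤ d` on `Γ`:  `(f|_w γ)(τ) = Σ_{j=0}^{d} (c/(cτ+d))^j f_j(τ)`. -/
def QuasiTransform (Γ : Subgroup SL2Z) (w : ℚ) (d : ℕ) (f : ℂ → ℂ) (fj : ℕ → ℂ → ℂ) : Prop :=
  fj 0 = f ∧ (∀ j, DifferentiableOn ℂ (fj j) UHP ∧ ModerateGrowth (fj j)) ∧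
    (∀ j, j > d → fj j = 0) ∧
    ∀ γ ∈ Γ, ∀ τ ∈ UHP,
      slash w γ f τ = ∑ j ∈ Finset.range (d + 1),
        (((γ : Matrix (Fin 2) (Fin 2) ℤ) 1 0 : ℂ) /
          (((γ : Matrix (Fin 2) (Fin 2) ℤ) 1 0 : ℂ) * τ +
            ((γ : Matrix (Fin 2) (Fin 2) ℤ) 1 1 : ℂ))) ^ j * fj j τ

/-- A quasimodular form of weight `w` and depth `≤ d` on `Γ`. -/
def IsQuasiModular (Γ : Subgroup SL2Z) (w : ℚ) (d : ℕ) (f : ℂ → ℂ) : Prop :=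
  ∃ fj : ℕ → ℂ → ℂ, QuasiTransform Γ w d f fj

/-- `F` is an almost holomorphic modular form of weight `w` and degree `≤ d` with
coefficient functions `g`: `F = Σ_j g_j Y^j` with `Y = -1/(4π Im τ)`, transforming
like a modular form of weight `w` on `Γ`. -/
def IsAlmostHolo (Γ : Subgroup SL2Z) (w : ℚ) (d : ℕ) (F : ℂ → ℂ) (g : ℕ → ℂ → ℂ) : Prop :=
  (∀ j, DifferentiableOn ℂ (g j) UHP ∧ ModerateGrowth (g j)) ∧ (∀ j, j > d → g j = 0) ∧
    (∀ τ ∈ UHP, F τ = ∑ j ∈ Finset.range (d + 1), g j τ * Yfun τ ^ j) ∧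
    ∀ γ ∈ Γ, ∀ τ ∈ UHP, slash w γ F τ = F τ

end RomikPaper

/-!
The `q`-binomial theorem `∏_{k<n} (1 + w x^k) = Σ_j [n, j]_x x^(j choose 2) w^j`, taken at
`x = q²`, `n = 2m`, `w = q^(1-2m)` and multiplied by `q^(m²)`, is the finite triple product
`∏_{k<m} (1 + q^(2k+1))² = Σ_{|i| ≤ m} [2m, m+i]_{q²} q^(i²)`. As `m → ∞` the Gaussian binomials
stay bounded and tend to `1 / φ(q²)`, where `φ(x) = ∏ (1 - x^(n+1))`, so dominated convergence
gives `Σ q^(n²) = φ(q²) ∏ (1 + q^(2n+1))²`. Splitting `φ(q)` into odd and even exponents,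
`φ(q) = φ(q²) ∏ (1 - q^(2n+1))`, and `(1 + q^(2n+1)) (1 - q^(2n+1)) = 1 - q^(4n+2)` rewrite this as
`φ(q²)⁵ / (φ(q)² φ(q⁴)²)`; the prefactors `q^(1/24)` of `η` cancel since `2·5 = 1·2 + 4·2`.
-/

open Finset

namespace QSeries

section Algebra

variable {K : Type*} [Field K] {x : K}

def qFactorial (x : K) (n : ℕ) : K := ∏ t ∈ range n, (1 - x ^ (t + 1))

def gaussBinom (x : K) (n j : ℕ) : K :=
  if j ≤ n then qFactorial x n / (qFactorial x j * qFactorial x (n - j)) else 0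

@[simp] lemma qFactorial_zero : qFactorial x 0 = 1 := prod_range_zero _

lemma qFactorial_succ (n : ℕ) : qFactorial x (n + 1) = qFactorial x n * (1 - x ^ (n + 1)) :=
  prod_range_succ _ _

lemma qFactorial_ne_zero (hx : ∀ n, x ^ (n + 1) ≠ 1) (n : ℕ) : qFactorial x n ≠ 0 :=
  prod_ne_zero_iff.mpr fun t _ => sub_ne_zero.mpr (hx t).symm

lemma gaussBinom_of_lt {n j : ℕ} (h : n < j) : gaussBinom x n j = 0 := if_neg (by omega)

lemma gaussBinom_of_add_eq {n j k : ℕ} (h : j + k = n) :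
    gaussBinom x n j = qFactorial x n / (qFactorial x j * qFactorial x k) := by
  rw [gaussBinom, if_pos (by omega), show n - j = k by omega]

lemma gaussBinom_zero_right (hx : ∀ n, x ^ (n + 1) ≠ 1) (n : ℕ) : gaussBinom x n 0 = 1 := by
  rw [gaussBinom_of_add_eq (zero_add n), qFactorial_zero, one_mul,
    div_self (qFactorial_ne_zero hx n)]

lemma gaussBinom_self (hx : ∀ n, x ^ (n + 1) ≠ 1) (n : ℕ) : gaussBinom x n n = 1 := by
  rw [gaussBinom_of_add_eq (add_zero n), qFactorial_zero, mul_one,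
    div_self (qFactorial_ne_zero hx n)]

/-- The `q`-Pascal rule, in the form matching `∏ (1 + w xᵏ) = (1 + w) ∏ (1 + (w x) xᵏ)`. -/
lemma gaussBinom_succ_succ (hx : ∀ n, x ^ (n + 1) ≠ 1) (n j : ℕ) :
    gaussBinom x (n + 1) (j + 1) = x ^ (j + 1) * gaussBinom x n (j + 1) + gaussBinom x n j := by
  rcases lt_trichotomy j n with h | rfl | h
  · obtain ⟨b, rfl⟩ := Nat.exists_eq_add_of_lt h
    rw [gaussBinom_of_add_eq (k := b + 1) (by ring), gaussBinom_of_add_eq (k := b) (by ring),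
      gaussBinom_of_add_eq (k := b + 1) (by ring), qFactorial_succ (j + b + 1), qFactorial_succ j,
      qFactorial_succ b]
    field_simp [qFactorial_ne_zero hx, sub_ne_zero.mpr (hx j).symm, sub_ne_zero.mpr (hx b).symm]
    ring
  · rw [gaussBinom_of_lt (Nat.lt_succ_self j), gaussBinom_self hx, gaussBinom_self hx]
    ring
  · rw [gaussBinom_of_lt (by omega), gaussBinom_of_lt (by omega), gaussBinom_of_lt h]
    ring

lemma choose_two_succ_add (j : ℕ) : (j + 1).choose 2 = j.choose 2 + j := by
  rw [Nat.choose_succ_succ', Nat.choose_one_right, add_comm]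

theorem prod_one_add_mul_pow_eq_sum_gaussBinom (hx : ∀ n, x ^ (n + 1) ≠ 1) (n : ℕ) (w : K) :
    ∏ k ∈ range n, (1 + w * x ^ k) =
      ∑ j ∈ range (n + 1), gaussBinom x n j * x ^ j.choose 2 * w ^ j := by
  induction n generalizing w with
  | zero => simp [gaussBinom_zero_right hx]
  | succ n ih =>
    set T : ℕ → K := fun j => gaussBinom x n j * x ^ j.choose 2 * (w * x) ^ j
    have hlast : T (n + 1) = 0 := by simp only [T, gaussBinom_of_lt n.lt_succ_self, zero_mul]
    have hT : ∑ j ∈ range (n + 1), T j = ∑ j ∈ range (n + 1), T (j + 1) + 1 := by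
      rw [← add_zero (∑ j ∈ range (n + 1), T j), ← hlast, ← sum_range_succ, sum_range_succ']
      simp [T, gaussBinom_zero_right hx]
    calc ∏ k ∈ range (n + 1), (1 + w * x ^ k)
        = (1 + w) * ∑ j ∈ range (n + 1), T j := by
          rw [prod_range_succ', ← ih, pow_zero, mul_one, mul_comm]
          exact congrArg _ (prod_congr rfl fun k _ => by ring)
      _ = ∑ j ∈ range (n + 1),
            (T (j + 1) + gaussBinom x n j * x ^ (j.choose 2 + j) * w ^ (j + 1)) + 1 := by
          rw [sum_add_distrib, add_right_comm, ← hT, add_mul, one_mul, mul_sum]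
          congr 1
          refine sum_congr rfl fun j _ => ?_
          simp only [T]
          ring
      _ = ∑ j ∈ range (n + 1 + 1), gaussBinom x (n + 1) j * x ^ j.choose 2 * w ^ j := by
          rw [sum_range_succ' (fun j => gaussBinom x (n + 1) j * x ^ j.choose 2 * w ^ j),
            gaussBinom_zero_right hx, Nat.choose_zero_succ, pow_zero, pow_zero, mul_one, mul_one]
          refine congrArg (· + 1) (sum_congr rfl fun j _ => ?_)
          simp only [gaussBinom_succ_succ hx, choose_two_succ_add, T]
          ring

lemma two_mul_choose_two_add_self (j : ℕ) : 2 * j.choose 2 + j = j * j := by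
  induction j with
  | zero => rfl
  | succ j ih => rw [choose_two_succ_add]; linear_combination ih

lemma zpow_natCast_sq_eq_prod {q : K} (hq : q ≠ 0) (m : ℕ) :
    q ^ ((m : ℤ) ^ 2) = ∏ k ∈ range m, q ^ (2 * k + 1) := by
  induction m with
  | zero => simp
  | succ m ih =>
    rw [prod_range_succ, ← ih, ← zpow_natCast, ← zpow_add₀ hq]
    push_cast
    ring_nf

theorem sq_prod_one_add_pow_odd_eq_sum_gaussBinom {q : K} (hq : q ≠ 0)
    (hx : ∀ n, (q ^ 2) ^ (n + 1) ≠ 1) (m : ℕ) :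
    (∏ k ∈ range m, (1 + q ^ (2 * k + 1))) ^ 2 =
      ∑ i ∈ Icc (-(m : ℤ)) m, gaussBinom (q ^ 2) (2 * m) (m + i).toNat * q ^ (i ^ 2) := by
  set w : K := q ^ (1 - 2 * (m : ℤ))
  have hfactor (k : ℕ) : w * (q ^ 2) ^ k = q ^ (2 * (k : ℤ) + 1 - 2 * m) := by
    rw [← pow_mul, ← zpow_natCast, ← zpow_add₀ hq]
    push_cast
    ring_nf
  have hlow : q ^ ((m : ℤ) ^ 2) * ∏ k ∈ range m, (1 + w * (q ^ 2) ^ k) =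
      ∏ k ∈ range m, (1 + q ^ (2 * k + 1)) := by
    rw [zpow_natCast_sq_eq_prod hq, ← prod_range_reflect (fun k => 1 + w * (q ^ 2) ^ k) m,
      ← prod_mul_distrib]
    refine prod_congr rfl fun k hk => ?_
    have hkm := mem_range.mp hk
    rw [hfactor, mul_add, mul_one, ← zpow_natCast, ← zpow_add₀ hq,
      show ((2 * k + 1 : ℕ) : ℤ) + (2 * ((m - 1 - k : ℕ) : ℤ) + 1 - 2 * m) = 0 by omega,
      zpow_zero, add_comm]
  have hhigh (k : ℕ) : 1 + w * (q ^ 2) ^ (m + k) = 1 + q ^ (2 * k + 1) := by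
    rw [hfactor, ← zpow_natCast]
    push_cast
    ring_nf
  have hterm (j : ℕ) :
      q ^ ((m : ℤ) ^ 2) * (gaussBinom (q ^ 2) (2 * m) j * (q ^ 2) ^ j.choose 2 * w ^ j) =
        gaussBinom (q ^ 2) (2 * m) j * q ^ (((j : ℤ) - m) ^ 2) := by
    have hchoose : ((2 * j.choose 2 + j : ℕ) : ℤ) = j * j := by
      exact_mod_cast two_mul_choose_two_add_self j
    have hbase : (q ^ 2) ^ j.choose 2 = q ^ ((2 * j.choose 2 : ℕ) : ℤ) := by
      rw [zpow_natCast, pow_mul]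
    have hw : w ^ j = q ^ ((1 - 2 * (m : ℤ)) * j) := by rw [_root_.zpow_mul, zpow_natCast]
    rw [hbase, hw, show ∀ a b c d : K, a * (b * c * d) = b * (a * c * d) by intros; ring,
      ← zpow_add₀ hq, ← zpow_add₀ hq]
    congr 2
    push_cast at hchoose ⊢
    linear_combination hchoose
  calc (∏ k ∈ range m, (1 + q ^ (2 * k + 1))) ^ 2
      = q ^ ((m : ℤ) ^ 2) * ∏ k ∈ range (2 * m), (1 + w * (q ^ 2) ^ k) := by
        rw [two_mul, prod_range_add, ← mul_assoc, hlow, sq]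
        simp only [hhigh]
    _ = ∑ j ∈ range (2 * m + 1), gaussBinom (q ^ 2) (2 * m) j * q ^ (((j : ℤ) - m) ^ 2) := by
        rw [prod_one_add_mul_pow_eq_sum_gaussBinom hx, mul_sum]
        exact sum_congr rfl fun j _ => hterm j
    _ = _ := by
        refine (sum_nbij' (fun i : ℤ => ((m : ℤ) + i).toNat) (fun j : ℕ => (j : ℤ) - m)
          ?_ ?_ ?_ ?_ ?_).symm
        all_goals intro a ha
        all_goals simp only [mem_Icc, mem_range] at ha ⊢
        · omega
        · omega
        · omega
        · omega
        · rw [show ((m + a).toNat : ℤ) - m = a by omega]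

end Algebra

section Analysis

open Filter Topology

variable {K : Type*} [NormedField K] {x : K}

noncomputable def eulerFun (x : K) : K := ∏' n : ℕ, (1 - x ^ (n + 1))

lemma summable_norm_pow_comp (hx : ‖x‖ < 1) {e : ℕ → ℕ} (he : ∀ n, n ≤ e n) :
    Summable fun n => ‖x ^ e n‖ :=
  (summable_geometric_of_lt_one (norm_nonneg x) hx).of_nonneg_of_le (fun _ => norm_nonneg _)
    fun n => by rw [norm_pow]; exact pow_le_pow_of_le_one (norm_nonneg x) hx.le (he n)

lemma norm_pow_lt_one (hx : ‖x‖ < 1) {k : ℕ} (hk : k ≠ 0) : ‖x ^ k‖ < 1 := by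
  rw [norm_pow]
  exact pow_lt_one₀ (norm_nonneg x) hx hk

lemma multipliable_one_add_pow_comp [CompleteSpace K] (hx : ‖x‖ < 1) {e : ℕ → ℕ}
    (he : ∀ n, n ≤ e n) : Multipliable fun n => 1 + x ^ e n :=
  multipliable_one_add_of_summable (summable_norm_pow_comp hx he)

lemma multipliable_one_sub_pow_comp [CompleteSpace K] (hx : ‖x‖ < 1) {e : ℕ → ℕ}
    (he : ∀ n, n ≤ e n) : Multipliable fun n => 1 - x ^ e n := by
  simpa [sub_eq_add_neg] using multipliable_one_add_of_summable (f := fun n => -x ^ e n)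
    (by simpa using summable_norm_pow_comp hx he)

lemma tprod_one_add_ne_zero_of_norm_lt_one [CompleteSpace K] {ι : Type*} {f : ι → K}
    (hf : ∀ i, ‖f i‖ < 1) (hs : Summable fun i => ‖f i‖) : ∏' i, (1 + f i) ≠ 0 :=
  tprod_one_add_ne_zero_of_summable
    (fun i h => by simpa [eq_neg_of_add_eq_zero_right h] using hf i) hs

lemma eulerFun_ne_zero [CompleteSpace K] (hx : ‖x‖ < 1) : eulerFun x ≠ 0 := by
  simpa [eulerFun, sub_eq_add_neg] using tprod_one_add_ne_zero_of_norm_lt_one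
    (f := fun n => -x ^ (n + 1)) (fun n => by simpa using norm_pow_lt_one hx n.succ_ne_zero)
    (by simpa using summable_norm_pow_comp hx (e := (· + 1)) fun n => n.le_succ)

lemma tendsto_qFactorial [CompleteSpace K] (hx : ‖x‖ < 1) :
    Tendsto (qFactorial x) atTop (𝓝 (eulerFun x)) :=
  (multipliable_one_sub_pow_comp hx (e := (· + 1)) fun n => n.le_succ).hasProd.tendsto_prod_nat

lemma qFactorial_nonneg {r : ℝ} (hr0 : 0 ≤ r) (hr1 : r < 1) (n : ℕ) : 0 ≤ qFactorial r n :=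
  prod_nonneg fun _ _ => sub_nonneg.mpr (pow_le_one₀ hr0 hr1.le)

lemma eulerFun_le_qFactorial {r : ℝ} (hr0 : 0 ≤ r) (hr1 : r < 1) (n : ℕ) :
    eulerFun r ≤ qFactorial r n := by
  have hr : ‖r‖ < 1 := by rwa [Real.norm_of_nonneg hr0]
  refine Antitone.le_of_tendsto (antitone_nat_of_succ_le fun n => ?_) (tendsto_qFactorial hr) n
  rw [qFactorial_succ]
  exact mul_le_of_le_one_right (qFactorial_nonneg hr0 hr1 n)
    (sub_le_self _ (pow_nonneg hr0 _))

lemma eulerFun_pos {r : ℝ} (hr0 : 0 ≤ r) (hr1 : r < 1) : 0 < eulerFun r :=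
  (tprod_nonneg fun n => sub_nonneg.mpr (pow_le_one₀ hr0 hr1.le)).lt_of_ne
    (eulerFun_ne_zero (by rwa [Real.norm_of_nonneg hr0])).symm

lemma eulerFun_norm_le_norm_qFactorial (hx : ‖x‖ < 1) (n : ℕ) :
    eulerFun ‖x‖ ≤ ‖qFactorial x n‖ := by
  refine (eulerFun_le_qFactorial (norm_nonneg x) hx n).trans ?_
  rw [qFactorial, qFactorial, norm_prod]
  refine prod_le_prod (fun _ _ => sub_nonneg.mpr (pow_le_one₀ (norm_nonneg x) hx.le))
    fun t _ => ?_
  simpa [norm_pow] using norm_sub_norm_le (1 : K) (x ^ (t + 1))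

lemma norm_qFactorial_le_tprod (hx : ‖x‖ < 1) (n : ℕ) :
    ‖qFactorial x n‖ ≤ ∏' t : ℕ, (1 + ‖x‖ ^ (t + 1)) := by
  have hmul : Multipliable fun t : ℕ => 1 + ‖x‖ ^ (t + 1) := by
    simpa using multipliable_one_add_pow_comp (x := ‖x‖) (by simpa using hx) (e := (· + 1))
      fun n => n.le_succ
  refine le_trans ?_ (Monotone.ge_of_tendsto (monotone_nat_of_le_succ fun n => ?_)
    hmul.hasProd.tendsto_prod_nat n)
  · rw [qFactorial, norm_prod]
    refine prod_le_prod (fun _ _ => norm_nonneg _) fun t _ => ?_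
    simpa [norm_pow] using norm_sub_le (1 : K) (x ^ (t + 1))
  · rw [prod_range_succ]
    exact le_mul_of_one_le_right (prod_nonneg fun _ _ => by positivity)
      (le_add_of_nonneg_right (by positivity))

lemma exists_norm_gaussBinom_le (hx : ‖x‖ < 1) : ∃ M, ∀ n j, ‖gaussBinom x n j‖ ≤ M := by
  have hpos := eulerFun_pos (norm_nonneg x) hx
  refine ⟨(∏' t : ℕ, (1 + ‖x‖ ^ (t + 1))) / eulerFun ‖x‖ ^ 2, fun n j => ?_⟩
  have hP : 0 ≤ ∏' t : ℕ, (1 + ‖x‖ ^ (t + 1)) := tprod_nonneg fun _ => by positivity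
  unfold gaussBinom
  split_ifs
  · rw [norm_div, norm_mul, sq]
    exact div_le_div₀ hP (norm_qFactorial_le_tprod hx n) (by positivity)
      (mul_le_mul (eulerFun_norm_le_norm_qFactorial hx j)
        (eulerFun_norm_le_norm_qFactorial hx _) hpos.le (norm_nonneg _))
  · rw [norm_zero]
    positivity

lemma tendsto_gaussBinom_add [CompleteSpace K] {α : Type*} {l : Filter α} {a b : α → ℕ}
    (hx : ‖x‖ < 1) (ha : Tendsto a l atTop) (hb : Tendsto b l atTop) :
    Tendsto (fun m => gaussBinom x (a m + b m) (a m)) l (𝓝 (eulerFun x)⁻¹) := by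
  have hφ := eulerFun_ne_zero hx
  simp only [gaussBinom_of_add_eq rfl]
  have hlim := (tendsto_qFactorial hx).comp
    (tendsto_atTop_mono (fun m => Nat.le_add_right (a m) (b m)) ha) |>.div
    (((tendsto_qFactorial hx).comp ha).mul ((tendsto_qFactorial hx).comp hb)) (mul_ne_zero hφ hφ)
  rwa [div_mul_cancel_right₀ hφ] at hlim

lemma zpow_sq_eq_pow_natAbs_sq (q : K) (i : ℤ) : q ^ (i ^ 2) = q ^ (i.natAbs ^ 2) := by
  rw [← Int.natAbs_sq, ← zpow_natCast]
  push_cast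
  rfl

lemma norm_zpow_sq_le (hq : ‖x‖ < 1) (i : ℤ) : ‖x ^ (i ^ 2)‖ ≤ ‖x‖ ^ i.natAbs := by
  rw [zpow_sq_eq_pow_natAbs_sq, norm_pow]
  exact pow_le_pow_of_le_one (norm_nonneg x) hq.le (Nat.le_self_pow two_ne_zero _)

lemma summable_pow_natAbs {r : ℝ} (hr0 : 0 ≤ r) (hr1 : r < 1) :
    Summable fun i : ℤ => r ^ i.natAbs :=
  .of_nat_of_neg (by simpa using summable_geometric_of_lt_one hr0 hr1)
    (by simpa using summable_geometric_of_lt_one hr0 hr1)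

theorem tsum_zpow_sq_eq_eulerFun_mul_sq [CompleteSpace K] {q : K} (hq : ‖q‖ < 1) (hq0 : q ≠ 0) :
    ∑' i : ℤ, q ^ (i ^ 2) = eulerFun (q ^ 2) * (∏' n : ℕ, (1 + q ^ (2 * n + 1))) ^ 2 := by
  have hq2 : ‖q ^ 2‖ < 1 := norm_pow_lt_one hq two_ne_zero
  have hroot (n : ℕ) : (q ^ 2) ^ (n + 1) ≠ 1 := fun h => by
    simpa [h] using norm_pow_lt_one hq2 n.succ_ne_zero
  set term : ℕ → ℤ → K := fun m i => gaussBinom (q ^ 2) (2 * m) (m + i).toNat * q ^ (i ^ 2)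
  set F : ℕ → ℤ → K := fun m => (Icc (-(m : ℤ)) m : Set ℤ).indicator (term m)
  have hfinite (m : ℕ) : (∏ k ∈ range m, (1 + q ^ (2 * k + 1))) ^ 2 = ∑' i, F m i := by
    rw [sq_prod_one_add_pow_odd_eq_sum_gaussBinom hq0 hroot,
      tsum_eq_sum (s := Icc (-(m : ℤ)) m) fun i hi => Set.indicator_of_notMem (mt mem_coe.mp hi) _]
    exact sum_congr rfl fun i hi => (Set.indicator_of_mem (mem_coe.mpr hi) (term m)).symm
  have hA : Tendsto (fun m => (∏ k ∈ range m, (1 + q ^ (2 * k + 1))) ^ 2) atTop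
      (𝓝 ((∏' n : ℕ, (1 + q ^ (2 * n + 1))) ^ 2)) :=
    (multipliable_one_add_pow_comp hq (e := fun n => 2 * n + 1)
      fun n => by omega).hasProd.tendsto_prod_nat.pow 2
  have hlim (i : ℤ) : Tendsto (F · i) atTop (𝓝 ((eulerFun (q ^ 2))⁻¹ * q ^ (i ^ 2))) := by
    have hsplit : ∀ᶠ m : ℕ in atTop,
        gaussBinom (q ^ 2) ((m + i).toNat + (m - i).toNat) (m + i).toNat * q ^ (i ^ 2) = F m i := by
      filter_upwards [eventually_ge_atTop i.natAbs] with m hm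
      have hmem : i ∈ (Icc (-(m : ℤ)) m : Set ℤ) := by simp only [mem_coe, mem_Icc]; omega
      rw [show F m i = term m i from Set.indicator_of_mem hmem _,
        show (m + i).toNat + (m - i).toNat = 2 * m by omega]
    refine ((tendsto_gaussBinom_add hq2 ?_ ?_).mul_const _).congr' hsplit
    all_goals exact tendsto_atTop_atTop.mpr fun b => ⟨b + i.natAbs, fun m hm => by omega⟩
  obtain ⟨M, hM⟩ := exists_norm_gaussBinom_le hq2
  have hbound : ∀ m i, ‖F m i‖ ≤ M * ‖q‖ ^ i.natAbs := fun m i =>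
    (norm_indicator_le_norm_self _ _).trans <| by
      rw [norm_mul]
      exact mul_le_mul (hM _ _) (norm_zpow_sq_le hq i) (by positivity)
        ((norm_nonneg _).trans (hM 0 0))
  have hsum := tendsto_tsum_of_dominated_convergence
    ((summable_pow_natAbs (norm_nonneg q) hq).mul_left M) hlim (.of_forall hbound)
  rw [tsum_mul_left, ← funext hfinite] at hsum
  rw [← tendsto_nhds_unique hsum hA, mul_inv_cancel_left₀ (eulerFun_ne_zero hq2)]

lemma tprod_one_sub_pow_odd_mul_eulerFun_sq [CompleteSpace K] (hx : ‖x‖ < 1) :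
    (∏' n : ℕ, (1 - x ^ (2 * n + 1))) * eulerFun (x ^ 2) = eulerFun x := by
  have heven : ∏' n : ℕ, (1 - x ^ (2 * n + 1 + 1)) = eulerFun (x ^ 2) :=
    tprod_congr fun n => by rw [← pow_mul]; ring_nf
  rw [← heven]
  exact tprod_even_mul_odd (f := fun n => 1 - x ^ (n + 1))
    (multipliable_one_sub_pow_comp hx fun n => by omega)
    (multipliable_one_sub_pow_comp hx fun n => by omega)

lemma tprod_one_add_pow_odd_mul_tprod_one_sub_pow_odd [CompleteSpace K] (hx : ‖x‖ < 1) :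
    (∏' n : ℕ, (1 + x ^ (2 * n + 1))) * (∏' n : ℕ, (1 - x ^ (2 * n + 1))) =
      ∏' n : ℕ, (1 - (x ^ 2) ^ (2 * n + 1)) := by
  rw [← (multipliable_one_add_pow_comp hx fun n => by omega).tprod_mul
    (multipliable_one_sub_pow_comp hx fun n => by omega)]
  exact tprod_congr fun n => by ring

lemma tprod_one_add_pow_odd_ne_zero [CompleteSpace K] (hx : ‖x‖ < 1) :
    ∏' n : ℕ, (1 + x ^ (2 * n + 1)) ≠ 0 :=
  tprod_one_add_ne_zero_of_norm_lt_one (fun n => norm_pow_lt_one hx (by omega))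
    (summable_norm_pow_comp hx fun n => by omega)

theorem tsum_zpow_sq_eq_eulerFun_div [CompleteSpace K] {q : K} (hq : ‖q‖ < 1) (hq0 : q ≠ 0) :
    ∑' i : ℤ, q ^ (i ^ 2) = eulerFun (q ^ 2) ^ 5 / (eulerFun q ^ 2 * eulerFun (q ^ 4) ^ 2) := by
  have hq2 : ‖q ^ 2‖ < 1 := norm_pow_lt_one hq two_ne_zero
  set A := ∏' n : ℕ, (1 + q ^ (2 * n + 1))
  set B := ∏' n : ℕ, (1 - q ^ (2 * n + 1))
  set C := ∏' n : ℕ, (1 - (q ^ 2) ^ (2 * n + 1))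
  have hAB : A * B = C := tprod_one_add_pow_odd_mul_tprod_one_sub_pow_odd hq
  have hB : B * eulerFun (q ^ 2) = eulerFun q := tprod_one_sub_pow_odd_mul_eulerFun_sq hq
  have hC : C * eulerFun (q ^ 4) = eulerFun (q ^ 2) := by
    rw [show q ^ 4 = (q ^ 2) ^ 2 by ring]
    exact tprod_one_sub_pow_odd_mul_eulerFun_sq hq2
  rw [eq_div_iff (mul_ne_zero (pow_ne_zero _ (eulerFun_ne_zero hq))
    (pow_ne_zero _ (eulerFun_ne_zero (norm_pow_lt_one hq four_ne_zero)))),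
    tsum_zpow_sq_eq_eulerFun_mul_sq hq hq0, ← hB]
  calc eulerFun (q ^ 2) * A ^ 2 * ((B * eulerFun (q ^ 2)) ^ 2 * eulerFun (q ^ 4) ^ 2)
      = eulerFun (q ^ 2) ^ 3 * (A * B * eulerFun (q ^ 4)) ^ 2 := by ring
    _ = eulerFun (q ^ 2) ^ 5 := by rw [hAB, hC]; ring

lemma tsum_zpow_sq_ne_zero [CompleteSpace K] {q : K} (hq : ‖q‖ < 1) (hq0 : q ≠ 0) :
    ∑' i : ℤ, q ^ (i ^ 2) ≠ 0 := by
  rw [tsum_zpow_sq_eq_eulerFun_mul_sq hq hq0]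
  exact mul_ne_zero (eulerFun_ne_zero (norm_pow_lt_one hq two_ne_zero))
    (pow_ne_zero _ (tprod_one_add_pow_odd_ne_zero hq))

end Analysis

end QSeries

namespace RomikPaper

open QSeries

lemma Θfun_eq_tsum_zpow (τ : ℂ) :
    Θfun τ = ∑' n : ℤ, cexp (2 * Real.pi * I * τ) ^ (n ^ 2) :=
  tsum_congr fun n => by rw [← Complex.exp_int_mul]; push_cast; ring_nf

lemma ηfun_nat_mul (k : ℕ) (τ : ℂ) :
    ηfun (k * τ) =
      cexp (2 * Real.pi * I * τ / 24) ^ k * eulerFun (cexp (2 * Real.pi * I * τ) ^ k) := by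
  rw [ηfun, eulerFun, ← Complex.exp_nat_mul]
  congr 1
  · ring_nf
  · exact tprod_congr fun n => by
      rw [← Complex.exp_nat_mul, ← Complex.exp_nat_mul]; push_cast; ring_nf

/-- Jacobi's identity `Θ(τ) = η(2τ)⁵/(η(τ)² η(4τ)²)`; in particular `Θ` has no zeros on
the upper half-plane. -/
theorem jacobi_identity :
    ∀ τ ∈ UHP, Θfun τ = ηfun (2 * τ) ^ 5 / (ηfun τ ^ 2 * ηfun (4 * τ) ^ 2) ∧ Θfun τ ≠ 0 := by
  intro τ hτ
  set q := cexp (2 * Real.pi * I * τ)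
  set c := cexp (2 * Real.pi * I * τ / 24)
  have hq : ‖q‖ < 1 := UpperHalfPlane.norm_exp_two_pi_I_lt_one ⟨τ, hτ⟩
  have hq0 : q ≠ 0 := Complex.exp_ne_zero _
  have hc : c ≠ 0 := Complex.exp_ne_zero _
  have hη1 : ηfun τ = c * eulerFun q := by
    simpa only [Nat.cast_one, one_mul, pow_one] using ηfun_nat_mul 1 τ
  have hη2 : ηfun (2 * τ) = c ^ 2 * eulerFun (q ^ 2) := by
    simpa only [Nat.cast_ofNat] using ηfun_nat_mul 2 τ
  have hη4 : ηfun (4 * τ) = c ^ 4 * eulerFun (q ^ 4) := by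
    simpa only [Nat.cast_ofNat] using ηfun_nat_mul 4 τ
  rw [Θfun_eq_tsum_zpow]
  refine ⟨?_, tsum_zpow_sq_ne_zero hq hq0⟩
  rw [tsum_zpow_sq_eq_eulerFun_div hq hq0, hη1, hη2, hη4]
  field_simp

end RomikPaper
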